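/- Let k, f : [0,2π] → ℝ be continuous, and set θ(t) = ∫₀^t k(s) ds and φ(t) = ∫₀^t f(s) ds. The curve γ_λ(t) = ∫₀^t exp(i(θ(s) + λφ(s))) ds satisfies γ_λ(2π) = γ_λ(0) for all λ ∈ ℝ if and only if ∫₀^{2π} exp(iθ(t)) · φ(t)ⁿ dt = 0 for all n ∈ ℕ. -/

import Mathlib

/-!
Expanding `exp (i λ φ)` in its exponential series and integrating termwise (dominated
convergence, `φ` being bounded) gives `γ_λ(2π) = ∑ₙ λⁿ iⁿ/n! ∫₀^{2π} e^{iθ} φⁿ`,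
a power series in `λ` converging for every real `λ`. It vanishes identically iff all of its
coefficients do, by uniqueness of power series expansions.
-/

open Real MeasureTheory intervalIntegral

open scoped ENNReal

theorem eq_zero_of_forall_hasSum_pow_smul_zero {𝕜 E : Type*}
    [NontriviallyNormedField 𝕜] [NormedAddCommGroup E] [NormedSpace 𝕜 E] {c : ℕ → E}
    (h : ∀ x : 𝕜, HasSum (fun n ↦ x ^ n • c n) 0) : c = 0 := by
  let p : FormalMultilinearSeries 𝕜 𝕜 E := fun n ↦
    ContinuousMultilinearMap.mkPiRing 𝕜 (Fin n) (c n)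
  have hcoeff : ∀ n, p.coeff n = c n := fun n ↦ by simp [p, FormalMultilinearSeries.coeff]
  obtain ⟨x₀, hx₀⟩ := NormedField.exists_one_lt_norm 𝕜
  have hradius : (‖x₀‖₊ : ℝ≥0∞) ≤ p.radius := by
    refine p.le_radius_of_tendsto (l := 0) ?_
    simpa [hcoeff, norm_smul, mul_comm] using (h x₀).summable.tendsto_atTop_zero.norm
  have hp : HasFPowerSeriesOnBall 0 p 0 ‖x₀‖₊ := by
    refine ⟨hradius, by simpa using zero_lt_one.trans hx₀, fun {y} _ ↦ ?_⟩
    simpa [FormalMultilinearSeries.apply_eq_pow_smul_coeff, hcoeff] using h y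
  funext n
  rw [← hcoeff, hp.hasFPowerSeriesAt.eq_zero]
  rfl

theorem hasSum_integral_mul_cexp_mul {α : Type*} [MeasurableSpace α] {μ : Measure α}
    {g φ : α → ℂ} (hg : Integrable g μ) (hφ : AEStronglyMeasurable φ μ) {M : ℝ}
    (hM : ∀ᵐ x ∂μ, ‖φ x‖ ≤ M) (z : ℂ) :
    HasSum (fun n : ℕ ↦ z ^ n / n.factorial * ∫ x, g x * φ x ^ n ∂μ)
      (∫ x, g x * Complex.exp (z * φ x) ∂μ) := by
  set F : ℕ → α → ℂ := fun n x ↦ z ^ n / n.factorial * (g x * φ x ^ n)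
  have hF_norm (n : ℕ) : ∀ᵐ x ∂μ, ‖F n x‖ ≤ ‖g x‖ * ((‖z‖ * M) ^ n / n.factorial) := by
    filter_upwards [hM] with x hx
    calc ‖F n x‖ = ‖g x‖ * (‖z‖ ^ n * ‖φ x‖ ^ n / n.factorial) := by
          simp only [F, norm_mul, norm_div, norm_pow, Complex.norm_natCast]; ring
      _ ≤ ‖g x‖ * (‖z‖ ^ n * M ^ n / n.factorial) := by gcongr
      _ = ‖g x‖ * ((‖z‖ * M) ^ n / n.factorial) := by rw [mul_pow]
  have hF_int : ∀ n, Integrable (F n) μ := fun n ↦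
    ((hg.mul_bdd (hφ.pow n) (hM.mono fun x hx ↦ by
      rw [Pi.pow_apply, norm_pow]; exact pow_le_pow_left₀ (norm_nonneg _) hx n)).const_mul _)
  have hF_sum : Summable fun n ↦ ∫ x, ‖F n x‖ ∂μ := by
    refine .of_nonneg_of_le (fun n ↦ integral_nonneg fun x ↦ norm_nonneg _) (fun n ↦ ?_)
      ((Real.summable_pow_div_factorial (‖z‖ * M)).mul_left (∫ x, ‖g x‖ ∂μ))
    rw [← MeasureTheory.integral_mul_const]
    exact integral_mono_ae (hF_int n).norm (hg.norm.mul_const _) (hF_norm n)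
  have hF_tsum : ∀ x, ∑' n, F n x = g x * Complex.exp (z * φ x) := fun x ↦ by
    rw [Complex.exp_eq_exp_ℂ]
    refine ((NormedSpace.expSeries_div_hasSum_exp (z * φ x)).mul_left (g x)).tsum_eq ▸ ?_
    congr 1 with n
    simp only [F, mul_pow]; ring
  simpa only [F, MeasureTheory.integral_const_mul, hF_tsum] using
    hasSum_integral_of_summable_integral_norm hF_int hF_sum

theorem continuousOn_primitive_Icc {E : Type*} [NormedAddCommGroup E] [NormedSpace ℝ E]
    {f : ℝ → E} {a b : ℝ} (hab : a ≤ b) (hf : ContinuousOn f (Set.Icc a b)) :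
    ContinuousOn (fun x ↦ ∫ t in a..x, f t) (Set.Icc a b) := by
  rw [← Set.uIcc_of_le hab] at hf ⊢
  exact continuousOn_primitive_interval hf.integrableOn_Icc

theorem stmt_2 (k f : ℝ → ℝ)
    (hk : ContinuousOn k (Set.Icc 0 (2 * π)))
    (hf : ContinuousOn f (Set.Icc 0 (2 * π)))
    (θ φ : ℝ → ℝ)
    (hθ : ∀ t, θ t = ∫ s in (0:ℝ)..t, k s)
    (hφ : ∀ t, φ t = ∫ s in (0:ℝ)..t, f s)
    (γ : ℝ → ℝ → ℂ)
    (hγ : ∀ l t, γ l t = ∫ s in (0:ℝ)..t,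
      Complex.exp (Complex.I * ((θ s : ℂ) + (l : ℂ) * (φ s : ℂ)))) :
    (∀ l : ℝ, γ l (2 * π) = γ l 0) ↔
    (∀ n : ℕ, ∫ t in (0:ℝ)..(2 * π),
        Complex.exp (Complex.I * (θ t : ℂ)) * (φ t : ℂ) ^ n = 0) := by
  have h2π : (0 : ℝ) ≤ 2 * π := by positivity
  have hθc : ContinuousOn θ (Set.Icc 0 (2 * π)) :=
    (continuousOn_primitive_Icc h2π hk).congr fun t _ ↦ hθ t
  have hφc : ContinuousOn (fun t ↦ (φ t : ℂ)) (Set.Icc 0 (2 * π)) :=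
    Complex.continuous_ofReal.comp_continuousOn <|
      (continuousOn_primitive_Icc h2π hf).congr fun t _ ↦ hφ t
  have hgc : ContinuousOn (fun t ↦ Complex.exp (Complex.I * θ t)) (Set.Icc 0 (2 * π)) := by
    fun_prop
  obtain ⟨M, hM⟩ := isCompact_Icc.exists_bound_of_continuousOn hφc
  set A : ℕ → ℂ := fun n ↦ ∫ t in (0:ℝ)..(2 * π),
    Complex.exp (Complex.I * (θ t : ℂ)) * (φ t : ℂ) ^ n
  have hγ_hasSum (l : ℝ) :
      HasSum (fun n ↦ l ^ n • (Complex.I ^ n / n.factorial * A n)) (γ l (2 * π)) := by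
    have := hasSum_integral_mul_cexp_mul (μ := volume.restrict (Set.Ioc 0 (2 * π)))
      (hgc.integrableOn_Icc.mono_set Set.Ioc_subset_Icc_self)
      ((hφc.mono Set.Ioc_subset_Icc_self).aestronglyMeasurable measurableSet_Ioc)
      (ae_restrict_of_forall_mem measurableSet_Ioc fun t ht ↦ hM t (Set.Ioc_subset_Icc_self ht))
      (Complex.I * l)
    simp only [A, hγ, integral_of_le h2π, mul_add, ← mul_assoc, Complex.exp_add] at this ⊢
    convert this using 2 with n
    rw [Complex.real_smul, mul_pow]
    push_cast
    ring
  have hγ_zero (l : ℝ) : γ l 0 = 0 := by simp [hγ]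
  simp only [hγ_zero]
  refine ⟨fun h n ↦ ?_, fun h l ↦ (hγ_hasSum l).unique (by simp [A, h])⟩
  have hc := congrFun (eq_zero_of_forall_hasSum_pow_smul_zero
    fun l ↦ h l ▸ hγ_hasSum l) n
  simpa [Nat.factorial_ne_zero] using hc
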